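/- Let G₁, G₂ be abelian groups and φ₁ : G₁ → G₁, φ₂ : G₂ → G₂ endomorphisms. Then the product endomorphism φ₁ × φ₂ of G₁ × G₂ satisfies h(φ₁ × φ₂) = h(φ₁) + h(φ₂) (with the convention a + ∞ = ∞). -/

import Mathlib

open Pointwise

/-- The `n`-th φ-trajectory `T_n(φ,F) = F + φ(F) + ⋯ + φ^{n-1}(F)` of a finite subset `F`. -/
noncomputable def traj {G : Type*} [AddCommGroup G] (φ : AddMonoid.End G) (F : Finset G)
    (n : ℕ) : Finset G :=
  letI := Classical.decEq G
  ∑ k ∈ Finset.range n, F.image (φ ^ k)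

section basic
variable {G : Type*} [AddCommGroup G] (φ : AddMonoid.End G) (F : Finset G)

lemma traj_zero : traj φ F 0 = {0} := by
  simp [traj]; rfl

lemma traj_succ (n : ℕ) :
    traj φ F (n + 1) = (letI := Classical.decEq G; traj φ F n + F.image (φ ^ n)) := by
  letI := Classical.decEq G
  simp [traj, Finset.sum_range_succ]

lemma traj_nonempty (hF : F.Nonempty) : ∀ n, (traj φ F n).Nonempty := by
  letI := Classical.decEq G
  intro n
  induction n with
  | zero => simp [traj_zero]
  | succ n ih =>
    rw [traj_succ]
    exact ih.add (hF.image _)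
end basic

section more
variable {G : Type*} [AddCommGroup G] (φ : AddMonoid.End G) (F : Finset G)

lemma traj_add (m n : ℕ) :
    traj φ F (m + n) = (letI := Classical.decEq G;
      traj φ F m + (traj φ F n).image (φ ^ m)) := by
  letI := Classical.decEq G
  induction n with
  | zero =>
    simp only [traj_zero, Nat.add_zero, Finset.image_singleton, map_zero]
    rw [show ({0} : Finset G) = (0 : Finset G) from rfl, add_zero]
  | succ n ih =>
    rw [show m + (n+1) = (m+n) + 1 from rfl, traj_succ, ih, traj_succ]
    rw [add_assoc]
    congr 1
    rw [Finset.image_add]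
    congr 1
    rw [Finset.image_image, pow_add]
    rfl
end more

/-- The algebraic entropy of `φ` with respect to `F`:
`H(φ,F) = lim_n log|T_n(φ,F)|/n = inf_{n ≥ 1} log|T_n(φ,F)|/n`. -/
noncomputable def entWith {G : Type*} [AddCommGroup G] (φ : AddMonoid.End G) (F : Finset G) : ℝ :=
  ⨅ n : ℕ, Real.log ((traj φ F (n + 1)).card) / (n + 1)

section fekete
variable {G : Type*} [AddCommGroup G] (φ : AddMonoid.End G) (F : Finset G)

lemma one_le_card_traj (hF : F.Nonempty) (n : ℕ) : 1 ≤ (traj φ F n).card :=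
  Finset.Nonempty.card_pos (traj_nonempty φ F hF n)

lemma card_traj_add_le (m n : ℕ) :
    (traj φ F (m + n)).card ≤ (traj φ F m).card * (traj φ F n).card := by
  letI := Classical.decEq G
  rw [traj_add]
  show (traj φ F m + (traj φ F n).image (φ ^ m)).card ≤ _
  exact le_trans (Finset.card_add_le (s := traj φ F m) (t := (traj φ F n).image (φ ^ m)))
    (Nat.mul_le_mul_left _ Finset.card_image_le)

lemma subadditive_log_card (hF : F.Nonempty) :
    Subadditive (fun n => Real.log ((traj φ F n).card)) := by
  intro m n
  simp only
  rw [← Real.log_mul, ← Nat.cast_mul]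
  · apply Real.log_le_log
    · exact_mod_cast one_le_card_traj φ F hF (m + n)
    · exact_mod_cast card_traj_add_le φ F m n
  · exact_mod_cast Nat.one_le_iff_ne_zero.1 (one_le_card_traj φ F hF m)
  · exact_mod_cast Nat.one_le_iff_ne_zero.1 (one_le_card_traj φ F hF n)

end fekete

section ent
open Filter Topology
variable {G : Type*} [AddCommGroup G] (φ : AddMonoid.End G) (F : Finset G)

lemma entSeq_nonneg (hF : F.Nonempty) (n : ℕ) :
    0 ≤ Real.log ((traj φ F (n + 1)).card) / (n + 1) := by
  apply div_nonneg _ (by positivity)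
  apply Real.log_nonneg
  exact_mod_cast one_le_card_traj φ F hF (n + 1)

lemma bddBelow_div (hF : F.Nonempty) :
    BddBelow (Set.range fun n : ℕ => Real.log ((traj φ F n).card) / n) := by
  refine ⟨0, ?_⟩
  rintro x ⟨n, rfl⟩
  apply div_nonneg _ (by positivity)
  apply Real.log_nonneg
  exact_mod_cast one_le_card_traj φ F hF n

lemma bddBelow_entSeq (hF : F.Nonempty) :
    BddBelow (Set.range fun n : ℕ => Real.log ((traj φ F (n + 1)).card) / (n + 1)) := by
  refine ⟨0, ?_⟩
  rintro x ⟨n, rfl⟩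
  exact entSeq_nonneg φ F hF n

lemma entWith_nonneg (hF : F.Nonempty) : 0 ≤ entWith φ F :=
  le_ciInf (entSeq_nonneg φ F hF)

lemma tendsto_entWith (hF : F.Nonempty) :
    Filter.Tendsto (fun n : ℕ => Real.log ((traj φ F (n + 1)).card) / (n + 1))
      Filter.atTop (𝓝 (entWith φ F)) := by
  have h := subadditive_log_card φ F hF
  have hb := bddBelow_div φ F hF
  have ht := h.tendsto_lim hb
  have heq : (fun n : ℕ => Real.log ((traj φ F (n + 1)).card) / ((n:ℝ) + 1)) =
      (fun n : ℕ => Real.log ((traj φ F n).card) / n) ∘ (fun n => n + 1) := by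
    funext n
    simp [Function.comp]
  have ht2 : Filter.Tendsto (fun n : ℕ => Real.log ((traj φ F (n + 1)).card) / ((n:ℝ) + 1))
      Filter.atTop (𝓝 h.lim) := by
    rw [heq]
    exact ht.comp (tendsto_add_atTop_nat 1)
  have key : entWith φ F = h.lim := by
    apply le_antisymm
    · exact ge_of_tendsto' ht2 (fun n => ciInf_le (bddBelow_entSeq φ F hF) n)
    · apply le_ciInf
      intro n
      have := h.lim_le_div hb (n := n + 1) (by omega)
      exact_mod_cast this
  rw [key]
  exact ht2

end ent

section mono
variable {G : Type*} [AddCommGroup G] (φ : AddMonoid.End G)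

lemma traj_mono {F F' : Finset G} (h : F ⊆ F') (n : ℕ) : traj φ F n ⊆ traj φ F' n := by
  letI := Classical.decEq G
  induction n with
  | zero => simp [traj_zero]
  | succ n ih =>
    rw [traj_succ, traj_succ]
    exact Finset.add_subset_add ih (Finset.image_subset_image h)

lemma entWith_mono {F F' : Finset G} (hF : F.Nonempty) (h : F ⊆ F') :
    entWith φ F ≤ entWith φ F' := by
  apply ciInf_mono (bddBelow_entSeq φ F hF)
  intro n
  gcongr
  · exact_mod_cast one_le_card_traj φ F hF (n+1)
  · exact_mod_cast traj_mono φ h (n+1)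

end mono

section prod
variable {G₁ G₂ : Type*} [AddCommGroup G₁] [AddCommGroup G₂]
  (φ₁ : AddMonoid.End G₁) (φ₂ : AddMonoid.End G₂)

lemma coe_prodMap_pow (k : ℕ)
    (Φ : AddMonoid.End (G₁ × G₂)) (hΦ : ⇑Φ = Prod.map ⇑φ₁ ⇑φ₂) :
    ⇑(Φ ^ k) = Prod.map ⇑(φ₁ ^ k) ⇑(φ₂ ^ k) := by
  rw [AddMonoid.End.coe_pow, AddMonoid.End.coe_pow, AddMonoid.End.coe_pow, hΦ,
    Prod.map_iterate]

omit [AddCommGroup G₁] [AddCommGroup G₂] in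
lemma prod_image_prodMap (F₁ : Finset G₁) (F₂ : Finset G₂) (f : G₁ → G₁) (g : G₂ → G₂) :
    letI := Classical.decEq G₁; letI := Classical.decEq G₂; letI := Classical.decEq (G₁ × G₂)
    (F₁ ×ˢ F₂).image (Prod.map f g) = (F₁.image f) ×ˢ (F₂.image g) := by
  letI := Classical.decEq G₁; letI := Classical.decEq G₂; letI := Classical.decEq (G₁ × G₂)
  ext ⟨x, y⟩
  simp only [Finset.mem_image, Finset.mem_product, Prod.ext_iff, Prod.map_apply]
  constructor
  · rintro ⟨⟨a, b⟩, ⟨ha, hb⟩, h1, h2⟩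
    exact ⟨⟨a, ha, h1⟩, ⟨b, hb, h2⟩⟩
  · rintro ⟨⟨a, ha, h1⟩, ⟨b, hb, h2⟩⟩
    exact ⟨⟨a, b⟩, ⟨ha, hb⟩, h1, h2⟩

lemma prod_add_prod (A C : Finset G₁) (B D : Finset G₂) :
    letI := Classical.decEq G₁; letI := Classical.decEq G₂; letI := Classical.decEq (G₁ × G₂)
    (A ×ˢ B) + (C ×ˢ D) = (A + C) ×ˢ (B + D) := by
  letI := Classical.decEq G₁; letI := Classical.decEq G₂; letI := Classical.decEq (G₁ × G₂)
  ext ⟨x, y⟩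
  simp only [Finset.mem_add, Finset.mem_product, Prod.ext_iff]
  constructor
  · rintro ⟨⟨a, b⟩, ⟨ha, hb⟩, ⟨c, d⟩, ⟨hc, hd⟩, h1, h2⟩
    exact ⟨⟨a, ha, c, hc, h1⟩, ⟨b, hb, d, hd, h2⟩⟩
  · rintro ⟨⟨a, ha, c, hc, h1⟩, ⟨b, hb, d, hd, h2⟩⟩
    exact ⟨⟨a, b⟩, ⟨ha, hb⟩, ⟨c, d⟩, ⟨hc, hd⟩, h1, h2⟩

lemma traj_prod (F₁ : Finset G₁) (F₂ : Finset G₂) (n : ℕ) :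
    traj (((φ₁ : G₁ →+ G₁).prodMap (φ₂ : G₂ →+ G₂)) : AddMonoid.End (G₁ × G₂)) (F₁ ×ˢ F₂) n =
      (traj φ₁ F₁ n) ×ˢ (traj φ₂ F₂ n) := by
  letI := Classical.decEq G₁; letI := Classical.decEq G₂; letI := Classical.decEq (G₁ × G₂)
  induction n with
  | zero =>
    rw [traj_zero, traj_zero]
    erw [traj_zero]
    ext ⟨x, y⟩
    simp [Prod.ext_iff]
  | succ n ih =>
    rw [traj_succ, traj_succ]
    erw [traj_succ, ih]
    show _ + _ = _
    rw [coe_prodMap_pow φ₁ φ₂ n _ (AddMonoidHom.coe_prodMap _ _),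
      prod_image_prodMap, prod_add_prod]

end prod

section entprod
open Filter Topology
variable {G₁ G₂ : Type*} [AddCommGroup G₁] [AddCommGroup G₂]
  (φ₁ : AddMonoid.End G₁) (φ₂ : AddMonoid.End G₂)

lemma entWith_prod {F₁ : Finset G₁} {F₂ : Finset G₂} (hF₁ : F₁.Nonempty) (hF₂ : F₂.Nonempty) :
    entWith (((φ₁ : G₁ →+ G₁).prodMap (φ₂ : G₂ →+ G₂)) : AddMonoid.End (G₁ × G₂)) (F₁ ×ˢ F₂) =
      entWith φ₁ F₁ + entWith φ₂ F₂ := by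
  have h1 := tendsto_entWith φ₁ F₁ hF₁
  have h2 := tendsto_entWith φ₂ F₂ hF₂
  have hΦ := tendsto_entWith
    (((φ₁ : G₁ →+ G₁).prodMap (φ₂ : G₂ →+ G₂)) : AddMonoid.End (G₁ × G₂)) (F₁ ×ˢ F₂)
    (hF₁.product hF₂)
  refine tendsto_nhds_unique hΦ ?_
  have heq : (fun n : ℕ => Real.log ((traj
      (((φ₁ : G₁ →+ G₁).prodMap (φ₂ : G₂ →+ G₂)) : AddMonoid.End (G₁ × G₂))
      (F₁ ×ˢ F₂) (n + 1)).card) / (n + 1))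
      = fun n : ℕ => Real.log ((traj φ₁ F₁ (n + 1)).card) / (n + 1)
        + Real.log ((traj φ₂ F₂ (n + 1)).card) / (n + 1) := by
    funext n
    rw [traj_prod, Finset.card_product, Nat.cast_mul, Real.log_mul, add_div]
    · exact_mod_cast Nat.one_le_iff_ne_zero.1 (one_le_card_traj φ₁ F₁ hF₁ (n + 1))
    · exact_mod_cast Nat.one_le_iff_ne_zero.1 (one_le_card_traj φ₂ F₂ hF₂ (n + 1))
  rw [heq]
  exact h1.add h2

end entprod

/-- The algebraic entropy `h(φ) = sup { H(φ,F) : F nonempty finite }`, valued in `[0,∞]`. -/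
noncomputable def algEnt {G : Type*} [AddCommGroup G] (φ : AddMonoid.End G) : ENNReal :=
  ⨆ (F : Finset G) (_ : F.Nonempty), ENNReal.ofReal (entWith φ F)

instance neSub {G : Type*} [AddCommGroup G] : Nonempty {F : Finset G // F.Nonempty} :=
  ⟨⟨{0}, Finset.singleton_nonempty 0⟩⟩

lemma algEnt_eq {G : Type*} [AddCommGroup G] (φ : AddMonoid.End G) :
    algEnt φ = ⨆ F : {F : Finset G // F.Nonempty}, ENNReal.ofReal (entWith φ F.1) := by
  rw [algEnt, iSup_subtype']

/-- Additivity of algebraic entropy for products: `h(φ₁ × φ₂) = h(φ₁) + h(φ₂)`. -/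
theorem stmt5 {G₁ G₂ : Type*} [AddCommGroup G₁] [AddCommGroup G₂]
    (φ₁ : AddMonoid.End G₁) (φ₂ : AddMonoid.End G₂) :
    algEnt (((φ₁ : G₁ →+ G₁).prodMap (φ₂ : G₂ →+ G₂)) : AddMonoid.End (G₁ × G₂)) =
      algEnt φ₁ + algEnt φ₂ := by
  letI := Classical.decEq G₁; letI := Classical.decEq G₂; letI := Classical.decEq (G₁ × G₂)
  set Φ : AddMonoid.End (G₁ × G₂) :=
    (((φ₁ : G₁ →+ G₁).prodMap (φ₂ : G₂ →+ G₂)) : AddMonoid.End (G₁ × G₂)) with hΦ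
  apply le_antisymm
  · rw [algEnt]
    refine iSup₂_le fun F hF => ?_
    have hsub : F ⊆ (F.image Prod.fst) ×ˢ (F.image Prod.snd) := Finset.subset_product
    have h1 : (F.image Prod.fst).Nonempty := hF.image _
    have h2 : (F.image Prod.snd).Nonempty := hF.image _
    have hle : entWith Φ F ≤ entWith φ₁ (F.image Prod.fst) + entWith φ₂ (F.image Prod.snd) := by
      rw [← entWith_prod φ₁ φ₂ h1 h2]
      exact entWith_mono Φ hF hsub
    calc ENNReal.ofReal (entWith Φ F)
        ≤ ENNReal.ofReal (entWith φ₁ (F.image Prod.fst) + entWith φ₂ (F.image Prod.snd)) :=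
          ENNReal.ofReal_le_ofReal hle
      _ = ENNReal.ofReal (entWith φ₁ (F.image Prod.fst))
          + ENNReal.ofReal (entWith φ₂ (F.image Prod.snd)) :=
          ENNReal.ofReal_add (entWith_nonneg φ₁ _ h1) (entWith_nonneg φ₂ _ h2)
      _ ≤ algEnt φ₁ + algEnt φ₂ := by
          gcongr
          · exact le_iSup₂ (f := fun F _ => ENNReal.ofReal (entWith φ₁ F)) _ h1
          · exact le_iSup₂ (f := fun F _ => ENNReal.ofReal (entWith φ₂ F)) _ h2
  · rw [algEnt_eq φ₁, algEnt_eq φ₂, ENNReal.iSup_add]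
    refine iSup_le fun F₁ => ?_
    rw [ENNReal.add_iSup]
    refine iSup_le fun F₂ => ?_
    rw [← ENNReal.ofReal_add (entWith_nonneg φ₁ _ F₁.2) (entWith_nonneg φ₂ _ F₂.2),
      ← entWith_prod φ₁ φ₂ F₁.2 F₂.2]
    exact le_iSup₂ (f := fun F _ => ENNReal.ofReal (entWith Φ F)) _ (F₁.2.product F₂.2)
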